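/- arXiv:2605.06099 — 3 statements merged into one kernel-verified Lean document; each statement's English description precedes it below -/
import Mathlib

section
/- For 0 < α < 2, c > 0, m > 0 and u ≥ 0, the Bernstein function Ψ_c^α admits the integral representation Ψ_c^α(u) = (α(2c^β)^{α/2})/(2Γ(1−α/2)) ∫₀^∞ (1 − e^{−uy}) exp(−(m c^γ)^{2/α} y /(2 c^β)) y^{−1−α/2} dy, where 2α = βγ + γ². -/
open Real Set MeasureTheory

/-!
With `s = α/2`, `k = 2c^β` and `b = (m c^γ)^{2/α} / k`, the left side is
`k^s ((u + b)^s - b^s)`. Since `e^{-uy} e^{-by} = e^{-(u+b)y}`, the integral splits as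
`I(u + b) - I(b)` with `I(λ) = ∫₀^∞ (1 - e^{-λy}) y^{-1-s} dy`, and one integration by parts
against `-y^{-s}/s` turns `I(λ)` into `(λ/s) ∫₀^∞ e^{-λy} y^{-s} dy = Γ(1-s) λ^s / s`.
-/

open Filter Topology

lemma one_sub_exp_neg_mul_nonneg {lam : ℝ} (hlam : 0 ≤ lam) {y : ℝ} (hy : 0 ≤ y) :
    0 ≤ 1 - exp (-lam * y) := by
  have : exp (-lam * y) ≤ 1 := exp_le_one_iff.mpr (by nlinarith)
  linarith

lemma one_sub_exp_neg_mul_le (lam y : ℝ) : 1 - exp (-lam * y) ≤ lam * y := by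
  rw [neg_mul]
  linarith [one_sub_le_exp_neg (lam * y)]

section OneSubExpNeg

variable {lam s : ℝ}

lemma integrableOn_one_sub_exp_neg_mul_mul_rpow (hs0 : 0 < s) (hs1 : s < 1) (hlam : 0 ≤ lam) :
    IntegrableOn (fun y : ℝ ↦ (1 - exp (-lam * y)) * y ^ (-1 - s)) (Ioi 0) := by
  have hmeas : AEStronglyMeasurable (fun y : ℝ ↦ (1 - exp (-lam * y)) * y ^ (-1 - s))
      (volume.restrict (Ioi 0)) := by fun_prop
  rw [← Ioc_union_Ioi_eq_Ioi zero_le_one, integrableOn_union]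
  constructor
  · have hint : IntegrableOn (fun y : ℝ ↦ lam * y ^ (-s)) (Ioc 0 1) :=
      ((intervalIntegrable_iff_integrableOn_Ioc_of_le zero_le_one).mp
        (intervalIntegral.intervalIntegrable_rpow' (by linarith))).const_mul lam
    refine hint.mono' (hmeas.mono_set Ioc_subset_Ioi_self) ?_
    filter_upwards [ae_restrict_mem measurableSet_Ioc] with y ⟨hy, _⟩
    rw [norm_of_nonneg (mul_nonneg (one_sub_exp_neg_mul_nonneg hlam hy.le) (by positivity)),
      show -s = 1 + (-1 - s) by ring, rpow_add hy, rpow_one, ← mul_assoc]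
    exact mul_le_mul_of_nonneg_right (one_sub_exp_neg_mul_le lam y) (by positivity)
  · refine (integrableOn_Ioi_rpow_of_lt (a := -1 - s) (by linarith) zero_lt_one).mono'
      (hmeas.mono_set (Ioi_subset_Ioi zero_le_one)) ?_
    filter_upwards [ae_restrict_mem measurableSet_Ioi] with y (hy : 1 < y)
    rw [norm_of_nonneg (mul_nonneg (one_sub_exp_neg_mul_nonneg hlam (by linarith))
      (by positivity))]
    exact mul_le_of_le_one_left (by positivity) (by linarith [exp_pos (-lam * y)])

lemma tendsto_one_sub_exp_neg_mul_mul_rpow_nhdsGT_zero (hs : s < 1) (hlam : 0 ≤ lam) :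
    Tendsto (fun y : ℝ ↦ (1 - exp (-lam * y)) * y ^ (-s)) (𝓝[>] 0) (𝓝 0) := by
  have hbound : Tendsto (fun y : ℝ ↦ lam * y ^ (1 - s)) (𝓝[>] 0) (𝓝 0) := by
    have := ((continuousAt_rpow_const 0 (1 - s) (Or.inr (by linarith))).tendsto.mono_left
      (nhdsWithin_le_nhds (s := Ioi 0))).const_mul lam
    rwa [zero_rpow (by linarith), mul_zero] at this
  refine squeeze_zero' ?_ ?_ hbound
  · filter_upwards [self_mem_nhdsWithin] with y (hy : 0 < y)
    exact mul_nonneg (one_sub_exp_neg_mul_nonneg hlam hy.le) (by positivity)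
  · filter_upwards [self_mem_nhdsWithin] with y (hy : 0 < y)
    rw [show 1 - s = 1 + -s by ring, rpow_add hy, rpow_one, ← mul_assoc]
    gcongr
    exact one_sub_exp_neg_mul_le lam y

lemma tendsto_one_sub_exp_neg_mul_mul_rpow_atTop (hs : 0 < s) (hlam : 0 < lam) :
    Tendsto (fun y : ℝ ↦ (1 - exp (-lam * y)) * y ^ (-s)) atTop (𝓝 0) := by
  have hexp : Tendsto (fun y : ℝ ↦ exp (-lam * y)) atTop (𝓝 0) :=
    (tendsto_exp_neg_atTop_nhds_zero.comp (tendsto_id.const_mul_atTop hlam)).congr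
      fun y ↦ by simp
  simpa using (hexp.const_sub 1).mul (tendsto_rpow_neg_atTop hs)

lemma integral_exp_neg_mul_mul_rpow_neg (hs : s < 1) (hlam : 0 < lam) :
    ∫ y in Ioi (0 : ℝ), exp (-lam * y) * y ^ (-s) = Gamma (1 - s) * lam ^ (s - 1) := by
  have := integral_rpow_mul_exp_neg_mul_Ioi (a := 1 - s) (by linarith) hlam
  rw [one_div, inv_rpow hlam.le, ← rpow_neg hlam.le, neg_sub, sub_sub_cancel_left] at this
  rw [mul_comm, ← this]
  simp_rw [mul_comm (exp _), neg_mul]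

theorem integral_one_sub_exp_neg_mul_mul_rpow (hs0 : 0 < s) (hs1 : s < 1) (hlam : 0 < lam) :
    ∫ y in Ioi (0 : ℝ), (1 - exp (-lam * y)) * y ^ (-1 - s) = Gamma (1 - s) * lam ^ s / s := by
  have hu : ∀ y ∈ Ioi (0 : ℝ),
      HasDerivAt (fun y ↦ 1 - exp (-lam * y)) (lam * exp (-lam * y)) y := fun y _ ↦
    ((((hasDerivAt_id y).const_mul (-lam)).exp).const_sub 1).congr_deriv (by simp [mul_comm])
  have hv : ∀ y ∈ Ioi (0 : ℝ), HasDerivAt (fun y ↦ -y ^ (-s) / s) (y ^ (-1 - s)) y :=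
    fun y hy ↦ ((hasDerivAt_rpow_const (p := -s) (Or.inl hy.ne')).neg.div_const s).congr_deriv
      (by rw [show -s - 1 = -1 - s by ring]; field_simp)
  have hu'v : IntegrableOn (fun y ↦ lam * exp (-lam * y) * (-y ^ (-s) / s)) (Ioi 0) :=
    IntegrableOn.congr_fun
      ((integrableOn_rpow_mul_exp_neg_mul_rpow (p := 1) (s := -s) (by linarith) one_pos
        hlam).const_mul (-(lam / s)))
      (fun y _ ↦ by simp only [rpow_one]; ring) measurableSet_Ioi
  have hlim (l : Filter ℝ)
      (h : Tendsto (fun y : ℝ ↦ (1 - exp (-lam * y)) * y ^ (-s)) l (𝓝 0)) :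
      Tendsto ((fun y ↦ 1 - exp (-lam * y)) * fun y ↦ -y ^ (-s) / s) l (𝓝 0) := by
    have := (h.div_const s).neg
    rw [zero_div, neg_zero] at this
    exact this.congr fun y ↦ by simp only [Pi.mul_apply]; ring
  rw [integral_Ioi_mul_deriv_eq_deriv_mul hu hv
    (integrableOn_one_sub_exp_neg_mul_mul_rpow hs0 hs1 hlam.le) hu'v
    (hlim _ (tendsto_one_sub_exp_neg_mul_mul_rpow_nhdsGT_zero hs1 hlam.le))
    (hlim _ (tendsto_one_sub_exp_neg_mul_mul_rpow_atTop hs0 hlam))]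
  simp_rw [show ∀ y, lam * exp (-lam * y) * (-y ^ (-s) / s)
    = -(lam / s) * (exp (-lam * y) * y ^ (-s)) from fun y ↦ by ring]
  rw [integral_const_mul, integral_exp_neg_mul_mul_rpow_neg hs1 hlam, rpow_sub_one hlam.ne']
  field_simp
  ring

theorem integral_one_sub_exp_neg_mul_mul_exp_neg_mul_rpow {b u : ℝ} (hs0 : 0 < s) (hs1 : s < 1)
    (hb : 0 < b) (hub : 0 < u + b) :
    ∫ y in Ioi (0 : ℝ), (1 - exp (-u * y)) * exp (-b * y) * y ^ (-1 - s)
      = Gamma (1 - s) / s * ((u + b) ^ s - b ^ s) := by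
  have hsplit : ∀ y : ℝ, (1 - exp (-u * y)) * exp (-b * y) * y ^ (-1 - s)
      = (1 - exp (-(u + b) * y)) * y ^ (-1 - s) - (1 - exp (-b * y)) * y ^ (-1 - s) := fun y ↦ by
    rw [show -(u + b) * y = -u * y + -b * y by ring, exp_add]
    ring
  simp_rw [hsplit]
  rw [integral_sub (integrableOn_one_sub_exp_neg_mul_mul_rpow hs0 hs1 hub.le)
      (integrableOn_one_sub_exp_neg_mul_mul_rpow hs0 hs1 hb.le),
    integral_one_sub_exp_neg_mul_mul_rpow hs0 hs1 hub,
    integral_one_sub_exp_neg_mul_mul_rpow hs0 hs1 hb]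
  ring

end OneSubExpNeg

theorem bernstein_integral_representation_general
    (α β γ m c : ℝ) (hα0 : 0 < α) (hα2 : α < 2)
    (hm : 0 < m) (hc : 0 < c)
    (u : ℝ) (hu : 0 ≤ u) :
    (2 * c ^ β * u + (m * c ^ γ) ^ (2 / α)) ^ (α / 2) - m * c ^ γ
      = α * (2 * c ^ β) ^ (α / 2) / (2 * Real.Gamma (1 - α / 2)) *
        ∫ y in Ioi (0 : ℝ),
          (1 - Real.exp (-u * y)) *
            Real.exp (-((m * c ^ γ) ^ (2 / α) * y) / (2 * c ^ β)) * y ^ (-1 - α / 2) := by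
  set s := α / 2 with hs
  have hs0 : 0 < s := by positivity
  have hs1 : s < 1 := by linarith
  set k := 2 * c ^ β
  set a := (m * c ^ γ) ^ (2 / α)
  have hk : 0 < k := by positivity
  have hmc : 0 < m * c ^ γ := by positivity
  have ha : a ^ s = m * c ^ γ := by
    rw [← rpow_mul hmc.le, show 2 / α * s = 1 by rw [hs]; field_simp, rpow_one]
  simp_rw [show ∀ y, -(a * y) / k = -(a / k) * y from fun y ↦ by ring]
  set b := a / k
  have hb : 0 < b := by positivity
  have hkb : k * b = a := mul_div_cancel₀ a hk.ne'
  rw [integral_one_sub_exp_neg_mul_mul_exp_neg_mul_rpow hs0 hs1 hb (by linarith), ← ha, ← hkb,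
    ← mul_add, mul_rpow hk.le (by linarith), mul_rpow hk.le hb.le]
  have hΓ : Gamma (1 - s) ≠ 0 := (Gamma_pos_of_pos (by linarith)).ne'
  rw [show α = 2 * s by rw [hs]; ring]
  field_simp

/-- Integral (Lévy–Khintchine) representation of the generalized relativistic
Bernstein function: for `0 < α < 2`, `c > 0`, `m > 0` and `u ≥ 0`,
`Ψ_c^α(u) = (α (2c^β)^{α/2})/(2 Γ(1−α/2)) ∫₀^∞ (1 − e^{−uy})
  e^{−(m c^γ)^{2/α} y /(2 c^β)} y^{−1−α/2} dy`, where `2α = βγ + γ²`. -/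
theorem bernstein_integral_representation
    (α β γ m c : ℝ) (hα0 : 0 < α) (hα2 : α < 2) (hβ : 0 < β) (hγ : 0 < γ)
    (hm : 0 < m) (hc : 0 < c) (hcon : 2 * α = β * γ + γ ^ 2)
    (u : ℝ) (hu : 0 ≤ u) :
    (2 * c ^ β * u + (m * c ^ γ) ^ (2 / α)) ^ (α / 2) - m * c ^ γ
      = α * (2 * c ^ β) ^ (α / 2) / (2 * Real.Gamma (1 - α / 2)) *
        ∫ y in Ioi (0 : ℝ),
          (1 - Real.exp (-u * y)) *
            Real.exp (-((m * c ^ γ) ^ (2 / α) * y) / (2 * c ^ β)) * y ^ (-1 - α / 2) :=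
  bernstein_integral_representation_general α β γ m c hα0 hα2 hm hc u hu
end

section
/- Let (T_t^c)_{t≥0} be the subordinator with Laplace exponent Ψ_c^α, i.e., E[e^{−u T_t^c}] = e^{−tΨ_c^α(u)} for u ≥ 0. Then for 0 < u < (m c^γ)^{2/α}/(2c^β), the exponential moment E[e^{u T_t^c}] is finite and equals exp(−t((−2c^β u + (m c^γ)^{2/α})^{α/2} − m c^γ)). -/
/-!
Write `k = 2c^β`, `a = (m c^γ)^{2/α}` and `G(s) = exp(-t((a - k s)^{α/2} - m c^γ))`. The
hypothesis says that the moment generating function `s ↦ E[e^{sT}]` equals `G` for `s ≤ 0`,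
and `G` extends holomorphically to the half-plane `Re z < a/k`. By the identity theorem this
extension agrees near `-1` with the complex moment generating function of `T`, so its Taylor
coefficients at `-1` are `E[T^n e^{-T}]/n! ≥ 0`, and its Taylor series converges on the disc of
radius `1 + a/k`. For `-1 ≤ s < a/k` the functions `(s+1)^n T^n e^{-T}/n!` are nonnegative and
sum to `e^{sT}`, so monotone convergence gives `E[e^{sT}] = G(s) < ∞`.
-/

open Real Set MeasureTheory
open Filter Topology ProbabilityTheory Metric
open scoped Nat

theorem Real.hasSum_pow_mul_exp (a b x : ℝ) :
    HasSum (fun n : ℕ ↦ a ^ n / n ! * (x ^ n * exp (b * x))) (exp ((a + b) * x)) := by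
  have := (NormedSpace.expSeries_div_hasSum_exp (a * x)).mul_right (exp (b * x))
  rw [← exp_eq_exp_ℝ, ← exp_add, ← add_mul] at this
  convert this using 2 with n
  · rfl
  · ring

namespace MeasureTheory

variable {α : Type*} [MeasurableSpace α] {μ : Measure α}

theorem integrable_and_integral_eq_of_hasSum_of_nonneg {f : ℕ → α → ℝ} {g : α → ℝ} {S : ℝ}
    (hf : ∀ n, Integrable (f n) μ) (hf_nonneg : ∀ n, 0 ≤ᵐ[μ] f n)
    (hfg : ∀ᵐ x ∂μ, HasSum (fun n ↦ f n x) (g x)) (hS : HasSum (fun n ↦ ∫ x, f n x ∂μ) S) :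
    Integrable g μ ∧ ∫ x, g x ∂μ = S := by
  have hf_nonneg' : ∀ᵐ x ∂μ, ∀ n, 0 ≤ f n x := ae_all_iff.2 hf_nonneg
  have hg_meas : AEStronglyMeasurable g μ :=
    aestronglyMeasurable_of_tendsto_ae atTop
      (fun N ↦ Finset.aestronglyMeasurable_fun_sum _ fun n _ ↦ (hf n).1)
      (by filter_upwards [hfg] with x hx using hx.tendsto_sum_nat)
  have hg_nonneg : 0 ≤ᵐ[μ] g := by
    filter_upwards [hfg, hf_nonneg'] with x hx hx0 using hx.nonneg hx0
  have hS_nonneg : 0 ≤ S := hS.nonneg fun n ↦ integral_nonneg_of_ae (hf_nonneg n)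
  have hlint : ∫⁻ x, ENNReal.ofReal (g x) ∂μ = ENNReal.ofReal S :=
    calc ∫⁻ x, ENNReal.ofReal (g x) ∂μ = ∫⁻ x, ∑' n, ENNReal.ofReal (f n x) ∂μ := by
          refine lintegral_congr_ae ?_
          filter_upwards [hfg, hf_nonneg'] with x hx hx0
          rw [← hx.tsum_eq, ENNReal.ofReal_tsum_of_nonneg hx0 hx.summable]
      _ = ∑' n, ∫⁻ x, ENNReal.ofReal (f n x) ∂μ :=
          lintegral_tsum fun n ↦ (hf n).aemeasurable.ennreal_ofReal
      _ = ∑' n, ENNReal.ofReal (∫ x, f n x ∂μ) := by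
          simp_rw [ofReal_integral_eq_lintegral_ofReal (hf _) (hf_nonneg _)]
      _ = ENNReal.ofReal S := by
          rw [← ENNReal.ofReal_tsum_of_nonneg (fun n ↦ integral_nonneg_of_ae (hf_nonneg n))
            hS.summable, hS.tsum_eq]
  refine ⟨⟨hg_meas, (hasFiniteIntegral_iff_ofReal hg_nonneg).2 (hlint ▸ ENNReal.ofReal_lt_top)⟩, ?_⟩
  rw [integral_eq_lintegral_of_nonneg_ae hg_nonneg hg_meas, hlint, ENNReal.toReal_ofReal hS_nonneg]

end MeasureTheory

namespace Complex

theorem re_lt_of_mem_ball {c r : ℝ} {z : ℂ} (hz : z ∈ ball (c : ℂ) r) : z.re < c + r := by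
  have := (re_le_norm _).trans_lt (mem_ball_iff_norm.1 hz)
  simp only [sub_re, ofReal_re] at this
  linarith

theorem differentiableOn_exp_mul_cpow_affine {k a : ℝ} (hk : 0 < k) (A p d : ℂ) :
    DifferentiableOn ℂ (fun z : ℂ ↦ exp (A * ((-(k * z) + a) ^ p - d)))
      {z | z.re < a / k} := by
  intro z (hz : z.re < a / k)
  have hslit : -(k * z) + a ∈ slitPlane := by
    refine mem_slitPlane_iff.2 (Or.inl ?_)
    simp only [add_re, neg_re, re_ofReal_mul, ofReal_re]
    linarith [(lt_div_iff₀' hk).1 hz]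
  exact ((((differentiableAt_id.const_mul _).neg.add_const _).cpow_const hslit).sub_const _
    |>.const_mul _ |>.cexp).differentiableWithinAt

theorem exp_mul_cpow_affine_ofReal {k a x : ℝ} (hx : k * x ≤ a) (A p d : ℝ) :
    exp (A * ((-(k * x) + a) ^ (p : ℂ) - d))
      = ↑(Real.exp (A * ((-(k * x) + a) ^ p - d))) := by
  rw [ofReal_exp, ofReal_mul, ofReal_sub,
    ofReal_cpow (by linarith)]
  push_cast
  rfl

end Complex

namespace ProbabilityTheory

variable {Ω : Type*} [MeasurableSpace Ω] {μ : Measure Ω} {X : Ω → ℝ}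

theorem _root_.AnalyticAt.eventuallyEq_complexMGF {F : ℂ → ℂ} {c : ℝ} (hF : AnalyticAt ℂ F c)
    (hc : c ∈ interior (integrableExpSet X μ))
    (hFX : ∀ᶠ x : ℝ in 𝓝 c, F x = mgf X μ x) : F =ᶠ[𝓝 (c : ℂ)] complexMGF X μ := by
  refine (hF.eventually_eq_or_eventually_ne
    (analyticAt_complexMGF (by simpa using hc))).resolve_right fun hne ↦ ?_
  have hofReal : Tendsto ((↑) : ℝ → ℂ) (𝓝[≠] c) (𝓝[≠] (c : ℂ)) :=
    Complex.continuous_ofReal.continuousWithinAt.tendsto_nhdsWithin fun x hx ↦ by simpa using hx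
  obtain ⟨x, hFx, hne_x⟩ :=
    ((hFX.filter_mono nhdsWithin_le_nhds).and (hofReal.eventually hne)).exists
  exact hne_x (by rw [hFx, complexMGF_ofReal])

theorem integrable_exp_mul_and_mgf_eq_of_differentiableOn_ball (hX : 0 ≤ᵐ[μ] X) {c R s : ℝ}
    (hc : c ∈ interior (integrableExpSet X μ)) {F : ℂ → ℂ}
    (hF : DifferentiableOn ℂ F (ball (c : ℂ) R)) (hFX : ∀ᶠ x : ℝ in 𝓝 c, F x = mgf X μ x)
    (hcs : c ≤ s) (hsR : s < c + R) :
    Integrable (fun ω ↦ exp (s * X ω)) μ ∧ mgf X μ s = (F s).re := by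
  have hs_mem : (s : ℂ) ∈ ball (c : ℂ) R := by
    rw [mem_ball, dist_eq_norm, ← Complex.ofReal_sub, Complex.norm_real, norm_of_nonneg] <;>
      linarith
  have hF_eq : F =ᶠ[𝓝 (c : ℂ)] complexMGF X μ :=
    (hF.analyticAt (ball_mem_nhds _ (by linarith))).eventuallyEq_complexMGF hc hFX
  have hderiv (n : ℕ) : iteratedDeriv n F c = ((μ[fun ω ↦ X ω ^ n * exp (c * X ω)] : ℝ) : ℂ) := by
    rw [hF_eq.iteratedDeriv_eq n, iteratedDeriv_complexMGF (by simpa using hc),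
      ← integral_complex_ofReal]
    push_cast
    rfl
  have hTaylor : HasSum (fun n : ℕ ↦ ∫ ω, (s - c) ^ n / n ! * (X ω ^ n * exp (c * X ω)) ∂μ)
      (F s).re := by
    convert (Complex.hasSum_taylorSeries_on_ball hF hs_mem).mapL Complex.reCLM using 2 with n
    · rw [integral_const_mul, Complex.reCLM_apply, hderiv]
      simp only [smul_eq_mul, ← Complex.ofReal_natCast, ← Complex.ofReal_inv,
        ← Complex.ofReal_sub, ← Complex.ofReal_pow, ← Complex.ofReal_mul, Complex.ofReal_re]
      ring
    · rfl
  have hterm_nonneg (n : ℕ) : 0 ≤ᵐ[μ] fun ω ↦ (s - c) ^ n / n ! * (X ω ^ n * exp (c * X ω)) := by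
    filter_upwards [hX] with ω (hω : 0 ≤ X ω)
    have : 0 ≤ s - c := by linarith
    positivity
  refine integrable_and_integral_eq_of_hasSum_of_nonneg
    (fun n ↦ (integrable_pow_mul_exp_of_mem_interior_integrableExpSet hc n).const_mul _)
    hterm_nonneg (ae_of_all _ fun ω ↦ ?_) hTaylor
  simpa using Real.hasSum_pow_mul_exp (s - c) c (X ω)

end ProbabilityTheory

theorem subordinator_exponential_moment_general
    {Ω : Type*} [MeasurableSpace Ω] (μ : Measure Ω)
    (α β γ m c t : ℝ) (hc : 0 < c)
    (T : Ω → ℝ) (hTpos : ∀ ω, 0 ≤ T ω)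
    (hLaplace : ∀ u : ℝ, 0 ≤ u →
      ∫ ω, Real.exp (-u * T ω) ∂μ
        = Real.exp (-t * ((2 * c ^ β * u + (m * c ^ γ) ^ (2 / α)) ^ (α / 2) - m * c ^ γ)))
    (u : ℝ) (hu0 : 0 < u) (hu : u < (m * c ^ γ) ^ (2 / α) / (2 * c ^ β)) :
    Integrable (fun ω => Real.exp (u * T ω)) μ ∧
    ∫ ω, Real.exp (u * T ω) ∂μ
      = Real.exp (-t * ((-(2 * c ^ β * u) + (m * c ^ γ) ^ (2 / α)) ^ (α / 2) - m * c ^ γ)) := by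
  set k := 2 * c ^ β
  set a := (m * c ^ γ) ^ (2 / α)
  have hk : 0 < k := by positivity
  set F : ℂ → ℂ := fun z ↦ Complex.exp (((-t : ℝ) : ℂ) *
    ((-(k * z) + a) ^ ((α / 2 : ℝ) : ℂ) - ((m * c ^ γ : ℝ) : ℂ)))
  have hF (x : ℝ) (hx : x < a / k) :
      F x = exp (-t * ((-(k * x) + a) ^ (α / 2) - m * c ^ γ)) :=
    Complex.exp_mul_cpow_affine_ofReal ((lt_div_iff₀' hk).1 hx).le _ _ _
  have hmgf (x : ℝ) (hx : x ≤ 0) :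
      mgf T μ x = exp (-t * ((-(k * x) + a) ^ (α / 2) - m * c ^ γ)) := by
    simpa only [mgf, neg_neg, mul_neg] using hLaplace (-x) (neg_nonneg.2 hx)
  -- A non-integrable function has Bochner integral `0`, so `hmgf` forces integrability.
  have h_neg_one : (-1 : ℝ) ∈ interior (integrableExpSet T μ) :=
    interior_maximal (fun x (hx : x ∈ Iio 0) ↦ Integrable.of_integral_ne_zero
      ((hmgf x (le_of_lt hx)).trans_ne (exp_pos _).ne')) isOpen_Iio (by norm_num)
  have hFT : ∀ᶠ x : ℝ in 𝓝 (-1), F x = mgf T μ x := by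
    filter_upwards [Iio_mem_nhds (by norm_num : (-1 : ℝ) < 0)] with x (hx : x < 0)
    rw [hF x (by linarith), hmgf x hx.le]
  have hF_diff : DifferentiableOn ℂ F (ball ((-1 : ℝ) : ℂ) (1 + a / k)) :=
    (Complex.differentiableOn_exp_mul_cpow_affine hk _ _ _).mono fun z hz ↦
      show z.re < a / k by linarith [Complex.re_lt_of_mem_ball hz]
  obtain ⟨hint, hmgf_u⟩ := integrable_exp_mul_and_mgf_eq_of_differentiableOn_ball (s := u)
    (ae_of_all _ hTpos) h_neg_one hF_diff hFT (by linarith) (by linarith)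
  refine ⟨hint, ?_⟩
  rw [← mgf, hmgf_u, hF u hu, Complex.ofReal_re]

/-- Let `T = T_t^c` be (the time-`t` marginal of) the subordinator with Laplace
exponent `Ψ_c^α`, i.e. `E[e^{−uT}] = e^{−tΨ_c^α(u)}` for all `u ≥ 0`. Then for
`0 < u < (m c^γ)^{2/α}/(2c^β)` the exponential moment `E[e^{uT}]` is finite and
equals `exp(−t((−2c^β u + (m c^γ)^{2/α})^{α/2} − m c^γ))`. -/
theorem subordinator_exponential_moment
    {Ω : Type*} [MeasurableSpace Ω] (μ : Measure Ω) [IsProbabilityMeasure μ]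
    (α β γ m c t : ℝ) (hα0 : 0 < α) (hα2 : α < 2) (hβ : 0 < β) (hγ : 0 < γ)
    (hm : 0 < m) (hc : 0 < c) (ht : 0 ≤ t)
    (T : Ω → ℝ) (hTmeas : Measurable T) (hTpos : ∀ ω, 0 ≤ T ω)
    (hLaplace : ∀ u : ℝ, 0 ≤ u →
      ∫ ω, Real.exp (-u * T ω) ∂μ
        = Real.exp (-t * ((2 * c ^ β * u + (m * c ^ γ) ^ (2 / α)) ^ (α / 2) - m * c ^ γ)))
    (u : ℝ) (hu0 : 0 < u) (hu : u < (m * c ^ γ) ^ (2 / α) / (2 * c ^ β)) :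
    Integrable (fun ω => Real.exp (u * T ω)) μ ∧
    ∫ ω, Real.exp (u * T ω) ∂μ
      = Real.exp (-t * ((-(2 * c ^ β * u) + (m * c ^ γ) ^ (2 / α)) ^ (α / 2) - m * c ^ γ)) :=
  subordinator_exponential_moment_general μ α β γ m c t hc T hTpos hLaplace u hu0 hu
end

section
/- For one-dimensional Brownian motion B started at 0 and R > 0, t > 0, the reflection principle gives P(max_{0≤s≤t} B_s ≥ R) = 2 P(B_t ≥ R) = (2/√(2πt)) ∫_R^∞ e^{−y²/(2t)} dy. -/
/-!
On the grid `k t / m` the values of `B` form a random walk whose remaining increment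
`B t - B (k t / m)` is a centred Gaussian independent of the past. Splitting the event that the
walk reaches `r` according to the first passage time `τ`, and reflecting the increment after `τ`
(which does not change the joint law of past and increment), gives
`P(max ≥ r, S_m < r) = ∑ₖ P(τ = k, S_m > 2 S_k - r)`. This is at most `P(S_m > r)`, and at least
`P(S_m > r + 2ε) - P(some step exceeds ε)` since `S_τ ≤ r + ε` when all steps are small.
As the mesh tends to zero, continuity of the paths makes the grid maximum reach every level below
the continuous one and the largest step vanish; letting the levels and `ε` converge gives
`P(max ≥ r) = 2 P(B_t ≥ r)`, and the Gaussian density of `B t` gives the integral.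
-/

open Real MeasureTheory Set ProbabilityTheory
open scoped ENNReal

/-- A standard one-dimensional Brownian motion starting at `0`: continuous paths,
`B 0 = 0`, Gaussian stationary increments, and independent increments. -/
def IsStandardBM {Ω : Type*} [MeasurableSpace Ω] (μ : Measure Ω)
    (B : ℝ → Ω → ℝ) : Prop :=
  (∀ ω, B 0 ω = 0) ∧
  (∀ ω, Continuous fun t => B t ω) ∧
  (∀ t, Measurable (B t)) ∧
  (∀ s t : ℝ, 0 ≤ s → s ≤ t →
    Measure.map (fun ω => B t ω - B s ω) μ = gaussianReal 0 (t - s).toNNReal) ∧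
  (∀ (n : ℕ) (ts : Fin (n + 1) → ℝ), Monotone ts → (∀ i, 0 ≤ ts i) →
    iIndepFun
      (fun i : Fin n => fun ω => B (ts i.succ) ω - B (ts i.castSucc) ω) μ)

open Filter Topology
open scoped Function

namespace ProbabilityTheory

variable {Ω α : Type*} [MeasurableSpace Ω] [MeasurableSpace α] {μ : Measure Ω}

theorem IndepFun.map_prodMk_neg_eq {E : Type*} [MeasurableSpace E] [Neg E] [MeasurableNeg E]
    [IsFiniteMeasure μ] {V : Ω → α} {Y : Ω → E}
    (hVY : IndepFun V Y μ) (hV : Measurable V) (hY : Measurable Y)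
    (hsym : μ.map (-Y) = μ.map Y) :
    μ.map (fun ω => (V ω, (-Y) ω)) = μ.map (fun ω => (V ω, Y ω)) := by
  have hVY' : IndepFun V (-Y) μ := hVY.comp measurable_id measurable_neg
  rw [(indepFun_iff_map_prod_eq_prod_map_map hV.aemeasurable hY.neg.aemeasurable).1 hVY',
    (indepFun_iff_map_prod_eq_prod_map_map hV.aemeasurable hY.aemeasurable).1 hVY, hsym]

theorem iIndepFun.indepFun_of_measurable_iSup {ι β : Type*} {κ : ι → Type*}
    [∀ i, MeasurableSpace (κ i)] [MeasurableSpace β] {X : ∀ i, Ω → κ i} (hX : iIndepFun X μ)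
    (hXm : ∀ i, Measurable (X i)) {s t : Set ι} (hst : Disjoint s t) {V : Ω → α} {Y : Ω → β}
    (hV : Measurable[⨆ i ∈ s, MeasurableSpace.comap (X i) inferInstance] V)
    (hY : Measurable[⨆ i ∈ t, MeasurableSpace.comap (X i) inferInstance] Y) :
    IndepFun V Y μ := by
  rw [IndepFun_iff_Indep]
  exact indep_of_indep_of_le_right (indep_of_indep_of_le_left
    (indep_iSup_of_disjoint (fun i => (hXm i).comap_le) hX.iIndep hst) hV.comap_le) hY.comap_le

end ProbabilityTheory

section FirstPassage

variable {Ω : Type*} (S : ℕ → Ω → ℝ) (r : ℝ)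

def firstPassage (k : ℕ) : Set Ω := {ω | r ≤ S k ω ∧ ∀ j < k, S j ω < r}

def reachesLevel (m : ℕ) : Set Ω := {ω | ∃ k ≤ m, r ≤ S k ω}

def largeIncrement (ε : ℝ) (m : ℕ) : Set Ω := {ω | ∃ k < m, ε < S (k + 1) ω - S k ω}

variable {S r}

theorem pairwise_disjoint_firstPassage : Pairwise (Disjoint on firstPassage S r) :=
  (pairwise_disjoint_on _).2 fun k _ hkl =>
    disjoint_left.2 fun _ hk hl => (hl.2 k hkl).not_ge hk.1

theorem reachesLevel_eq_biUnion_firstPassage (m : ℕ) :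
    reachesLevel S r m = ⋃ k ∈ Finset.range (m + 1), firstPassage S r k := by
  ext ω
  simp only [reachesLevel, firstPassage, mem_ofPred_eq, mem_iUnion, Finset.mem_range,
    Nat.lt_succ_iff, exists_prop]
  constructor
  · rintro ⟨k, hk, hrk⟩
    have hex : ∃ j, r ≤ S j ω := ⟨k, hrk⟩
    exact ⟨Nat.find hex, (Nat.find_le hrk).trans hk, Nat.find_spec hex,
      fun j hj => not_le.1 (Nat.find_min hex hj)⟩
  · rintro ⟨k, hk, hrk, -⟩
    exact ⟨k, hk, hrk⟩

variable [MeasurableSpace Ω] (hS : ∀ k, Measurable (S k))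
include hS

theorem measurableSet_firstPassage (k : ℕ) : MeasurableSet (firstPassage S r k) := by
  simp only [firstPassage, ofPred_and, ofPred_forall]
  exact (measurableSet_le measurable_const (hS k)).inter
    (.iInter fun j => .iInter fun _ => measurableSet_lt (hS j) measurable_const)

theorem measurableSet_largeIncrement (ε : ℝ) (m : ℕ) : MeasurableSet (largeIncrement S ε m) := by
  simp only [largeIncrement, ofPred_exists, ofPred_and]
  exact .iUnion fun k => .inter (.const _) (measurableSet_lt measurable_const ((hS _).sub (hS k)))

variable (μ : Measure Ω)

theorem measure_reachesLevel_inter {C : Set Ω} (hC : MeasurableSet C) (m : ℕ) :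
    μ (reachesLevel S r m ∩ C) = ∑ k ∈ Finset.range (m + 1), μ (firstPassage S r k ∩ C) := by
  rw [reachesLevel_eq_biUnion_firstPassage, iUnion₂_inter]
  exact measure_biUnion_finset
    (fun k _ l _ hkl => (pairwise_disjoint_firstPassage hkl).mono inter_subset_left
      inter_subset_left)
    fun k _ => (measurableSet_firstPassage hS k).inter hC

theorem measure_reachesLevel_eq_add (m : ℕ) :
    μ (reachesLevel S r m) = μ (reachesLevel S r m ∩ {ω | S m ω < r}) + μ {ω | r ≤ S m ω} := by
  have hdiff : reachesLevel S r m \ {ω | S m ω < r} = {ω | r ≤ S m ω} := by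
    ext ω
    simp only [Set.mem_sdiff, mem_ofPred_eq, not_lt]
    exact ⟨And.right, fun h => ⟨⟨m, le_rfl, h⟩, h⟩⟩
  rw [← hdiff, measure_inter_add_sdiff _ (measurableSet_lt (hS m) measurable_const)]

variable {μ} [IsFiniteMeasure μ]

theorem measure_firstPassage_inter_lt_eq {k m : ℕ}
    (hind : IndepFun (fun ω (i : Fin (k + 1)) => S i ω) (S m - S k) μ)
    (hsym : μ.map (-(S m - S k)) = μ.map (S m - S k)) :
    μ (firstPassage S r k ∩ {ω | S m ω < r})
      = μ (firstPassage S r k ∩ {ω | 2 * S k ω - r < S m ω}) := by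
  set V : Ω → Fin (k + 1) → ℝ := fun ω i => S i ω
  -- Both events read `(V, ±(S m - S k)) ∈ D`, and the two pairs have the same law.
  set D : Set ((Fin (k + 1) → ℝ) × ℝ) := {p | (r ≤ p.1 (Fin.last k) ∧
    ∀ j : Fin (k + 1), j < Fin.last k → p.1 j < r) ∧ p.2 < r - p.1 (Fin.last k)}
  have hD : MeasurableSet D := by measurability
  have hVk : ∀ ω, V ω (Fin.last k) = S k ω := fun _ => rfl
  have hV : Measurable V := measurable_pi_lambda _ fun i => hS i
  have hfp : ∀ ω, (r ≤ V ω (Fin.last k) ∧ ∀ j : Fin (k + 1), j < Fin.last k → V ω j < r) ↔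
      ω ∈ firstPassage S r k := by
    intro ω
    simp only [V, firstPassage, Fin.forall_iff, Fin.lt_def, Fin.val_last, mem_ofPred_eq]
    exact and_congr_right fun _ => ⟨fun h j hj => h j (by omega) hj, fun h j _ => h j⟩
  have h1 : firstPassage S r k ∩ {ω | S m ω < r} = (fun ω => (V ω, (S m - S k) ω)) ⁻¹' D := by
    ext ω
    simp only [D, mem_preimage, mem_ofPred_eq, hfp, mem_inter_iff, Pi.sub_apply]
    constructor <;> rintro ⟨h, h'⟩ <;> exact ⟨h, by linarith [hVk ω]⟩
  have h2 : firstPassage S r k ∩ {ω | 2 * S k ω - r < S m ω}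
      = (fun ω => (V ω, (-(S m - S k)) ω)) ⁻¹' D := by
    ext ω
    simp only [D, mem_preimage, mem_ofPred_eq, hfp, mem_inter_iff, Pi.sub_apply, Pi.neg_apply]
    constructor <;> rintro ⟨h, h'⟩ <;> exact ⟨h, by linarith [hVk ω]⟩
  rw [h1, h2, ← Measure.map_apply (hV.prodMk ((hS m).sub (hS k))) hD,
    ← Measure.map_apply (hV.prodMk ((hS m).sub (hS k)).neg) hD,
    hind.map_prodMk_neg_eq hV ((hS m).sub (hS k)) hsym]

variable {m : ℕ}
  (hind : ∀ k ≤ m, IndepFun (fun ω (i : Fin (k + 1)) => S i ω) (S m - S k) μ)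
  (hsym : ∀ k ≤ m, μ.map (-(S m - S k)) = μ.map (S m - S k))
include hind hsym

theorem measure_reachesLevel_inter_lt_eq_sum :
    μ (reachesLevel S r m ∩ {ω | S m ω < r})
      = ∑ k ∈ Finset.range (m + 1), μ (firstPassage S r k ∩ {ω | 2 * S k ω - r < S m ω}) := by
  rw [measure_reachesLevel_inter hS μ (measurableSet_lt (hS m) measurable_const)]
  refine Finset.sum_congr rfl fun k hk => ?_
  have hkm := Nat.lt_succ_iff.1 (Finset.mem_range.1 hk)
  exact measure_firstPassage_inter_lt_eq hS (hind k hkm) (hsym k hkm)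

theorem measure_reachesLevel_inter_lt_le :
    μ (reachesLevel S r m ∩ {ω | S m ω < r}) ≤ μ {ω | r < S m ω} :=
  calc μ (reachesLevel S r m ∩ {ω | S m ω < r})
      = ∑ k ∈ Finset.range (m + 1), μ (firstPassage S r k ∩ {ω | 2 * S k ω - r < S m ω}) :=
        measure_reachesLevel_inter_lt_eq_sum hS hind hsym
    _ ≤ ∑ k ∈ Finset.range (m + 1), μ (firstPassage S r k ∩ {ω | r < S m ω}) :=
        Finset.sum_le_sum fun k _ => measure_mono fun ω ⟨hk, h⟩ => ⟨hk, by
          have : r ≤ S k ω := hk.1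
          simp only [mem_ofPred_eq] at h ⊢
          linarith⟩
    _ = μ (reachesLevel S r m ∩ {ω | r < S m ω}) :=
        (measure_reachesLevel_inter hS μ (measurableSet_lt measurable_const (hS m)) m).symm
    _ ≤ μ {ω | r < S m ω} := measure_mono inter_subset_right

theorem measure_lt_le_measure_reachesLevel_inter_lt_add (h0 : ∀ ω, S 0 ω < r) {ε : ℝ}
    (hε : 0 ≤ ε) :
    μ {ω | r + 2 * ε < S m ω}
      ≤ μ (reachesLevel S r m ∩ {ω | S m ω < r}) + μ (largeIncrement S ε m) := by
  have hsub : ∀ k ≤ m, firstPassage S r k ∩ {ω | r + 2 * ε < S m ω} ⊆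
      (firstPassage S r k ∩ {ω | 2 * S k ω - r < S m ω}) ∪
        (firstPassage S r k ∩ largeIncrement S ε m) := by
    rintro k hk ω ⟨hfp, hω⟩
    simp only [mem_ofPred_eq] at hω
    by_cases hle : S k ω ≤ r + ε
    · exact Or.inl ⟨hfp, by simp only [mem_ofPred_eq]; linarith⟩
    · obtain ⟨j, rfl⟩ : ∃ j, k = j + 1 :=
        Nat.exists_eq_succ_of_ne_zero fun h => (h0 ω).not_ge (h ▸ hfp.1)
      exact Or.inr ⟨hfp, j, hk, by linarith [hfp.2 j j.lt_succ_self]⟩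
  have hreach : {ω | r + 2 * ε < S m ω} ⊆ reachesLevel S r m := fun ω hω =>
    ⟨m, le_rfl, by simp only [mem_ofPred_eq] at hω ⊢; linarith⟩
  calc μ {ω | r + 2 * ε < S m ω}
      = μ (reachesLevel S r m ∩ {ω | r + 2 * ε < S m ω}) := by
        rw [inter_eq_right.2 hreach]
    _ = ∑ k ∈ Finset.range (m + 1), μ (firstPassage S r k ∩ {ω | r + 2 * ε < S m ω}) :=
        measure_reachesLevel_inter hS μ (measurableSet_lt measurable_const (hS m)) m
    _ ≤ ∑ k ∈ Finset.range (m + 1), (μ (firstPassage S r k ∩ {ω | 2 * S k ω - r < S m ω})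
          + μ (firstPassage S r k ∩ largeIncrement S ε m)) :=
        Finset.sum_le_sum fun k hk => (measure_mono (hsub k
          (Nat.lt_succ_iff.1 (Finset.mem_range.1 hk)))).trans (measure_union_le _ _)
    _ = μ (reachesLevel S r m ∩ {ω | S m ω < r})
          + μ (reachesLevel S r m ∩ largeIncrement S ε m) := by
        rw [Finset.sum_add_distrib, measure_reachesLevel_inter_lt_eq_sum hS hind hsym,
          measure_reachesLevel_inter hS μ (measurableSet_largeIncrement hS ε m)]
    _ ≤ μ (reachesLevel S r m ∩ {ω | S m ω < r}) + μ (largeIncrement S ε m) := by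
        gcongr; exact inter_subset_right

theorem measure_reachesLevel_le :
    μ (reachesLevel S r m) ≤ μ {ω | r < S m ω} + μ {ω | r ≤ S m ω} := by
  rw [measure_reachesLevel_eq_add hS μ]
  exact add_le_add (measure_reachesLevel_inter_lt_le hS hind hsym) le_rfl

theorem measure_lt_add_measure_le_le (h0 : ∀ ω, S 0 ω < r) {ε : ℝ} (hε : 0 ≤ ε) :
    μ {ω | r + 2 * ε < S m ω} + μ {ω | r ≤ S m ω}
      ≤ μ (reachesLevel S r m) + μ (largeIncrement S ε m) := by
  rw [measure_reachesLevel_eq_add hS μ, add_right_comm]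
  exact add_le_add (measure_lt_le_measure_reachesLevel_inter_lt_add hS hind hsym h0 hε) le_rfl

end FirstPassage

section RandomWalk

variable {Ω : Type*} [MeasurableSpace Ω] {μ : Measure Ω} {S : ℕ → Ω → ℝ}

theorem indepFun_past_sub_of_iIndepFun_increments (hS : ∀ k, Measurable (S k)) (h0 : S 0 = 0)
    {k m : ℕ} (hkm : k ≤ m) (hind : iIndepFun (fun i : Fin m => S ((i : ℕ) + 1) - S i) μ) :
    IndepFun (fun ω (j : Fin (k + 1)) => S j ω) (S m - S k) μ := by
  set ξ : Fin m → Ω → ℝ := fun i => S ((i : ℕ) + 1) - S i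
  have hξ (i : Fin m) : Measurable (ξ i) := (hS _).sub (hS _)
  have hblock {s : Set (Fin m)} {a b : ℕ} (hab : a ≤ b) (hbm : b ≤ m)
      (hs : ∀ i : Fin m, a ≤ i → (i : ℕ) < b → i ∈ s) :
      Measurable[⨆ i ∈ s, MeasurableSpace.comap (ξ i) inferInstance] (S b - S a) := by
    rw [← Finset.sum_Ico_sub S hab, Finset.sum_fn]
    refine Finset.measurable_sum _ fun i hi => ?_
    obtain ⟨hai, hib⟩ := Finset.mem_Ico.1 hi
    have hi' : i < m := hib.trans_le hbm
    exact (comap_measurable (ξ ⟨i, hi'⟩)).mono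
      (le_iSup₂ (f := fun i _ => MeasurableSpace.comap (ξ i) inferInstance) ⟨i, hi'⟩
        (hs ⟨i, hi'⟩ hai hib)) le_rfl
  set past : Set (Fin m) := {i | (i : ℕ) < k}
  refine hind.indepFun_of_measurable_iSup hξ (disjoint_compl_right (a := past))
    ?_ (hblock (s := pastᶜ) hkm le_rfl fun i hi _ => not_lt.2 hi)
  let _ : MeasurableSpace Ω := ⨆ i ∈ past, MeasurableSpace.comap (ξ i) inferInstance
  refine measurable_pi_lambda _ fun j => ?_
  have hj : (j : ℕ) ≤ k := Nat.lt_succ_iff.1 j.isLt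
  simpa [h0] using hblock (Nat.zero_le j) (hj.trans hkm) fun i _ hi => hi.trans_le hj

end RandomWalk

section Grid

variable {Ω : Type*} {B : ℝ → Ω → ℝ} {t : ℝ} {m : ℕ}

noncomputable def gridProcess (B : ℝ → Ω → ℝ) (t : ℝ) (m k : ℕ) : Ω → ℝ := B (k * t / m)

theorem gridProcess_self (hm : m ≠ 0) : gridProcess B t m m = B t := by
  simp [gridProcess, mul_div_cancel_left₀ t (Nat.cast_ne_zero.2 hm)]

theorem natCast_mul_div_mem_Icc (ht : 0 ≤ t) {k : ℕ} (hkm : k ≤ m) :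
    (k : ℝ) * t / m ∈ Icc 0 t := by
  refine ⟨by positivity, div_le_of_le_mul₀ (Nat.cast_nonneg _) ht ?_⟩
  rw [mul_comm]
  exact mul_le_mul_of_nonneg_left (Nat.cast_le.2 hkm) ht

end Grid

section Limits

theorem Continuous.eventually_abs_sub_lt_of_gridpoints {f : ℝ → ℝ} (hf : Continuous f) {t : ℝ}
    (ht : 0 ≤ t) {ε : ℝ} (hε : 0 < ε) :
    ∀ᶠ m : ℕ in atTop, ∀ k < m, |f ((k + 1 : ℕ) * t / m) - f (k * t / m)| < ε := by
  obtain ⟨δ, hδ, hfδ⟩ := Metric.uniformContinuousOn_iff.1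
    (isCompact_Icc.uniformContinuousOn_of_continuous (hf.continuousOn (s := Icc 0 t))) ε hε
  filter_upwards [(tendsto_const_div_atTop_nhds_zero_nat t).eventually (gt_mem_nhds hδ)]
    with m hm k hk
  have hstep : ((k + 1 : ℕ) : ℝ) * t / m - k * t / m = t / m := by push_cast; ring
  rw [← Real.dist_eq]
  refine hfδ _ (natCast_mul_div_mem_Icc ht hk) _ (natCast_mul_div_mem_Icc ht hk.le) ?_
  rwa [Real.dist_eq, hstep, abs_of_nonneg (by positivity)]

theorem Continuous.eventually_exists_le_of_lt_iSup {f : ℝ → ℝ} (hf : Continuous f) {t r : ℝ}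
    (ht : 0 < t) (hr : r < ⨆ s : Icc (0 : ℝ) t, f s) :
    ∀ᶠ m : ℕ in atTop, ∃ k ≤ m, r ≤ f (k * t / m) := by
  have : Nonempty (Icc 0 t) := ⟨⟨0, le_rfl, ht.le⟩⟩
  obtain ⟨⟨s, hs0, hst⟩, hrs⟩ := exists_lt_of_lt_ciSup hr
  have hlim : Tendsto (fun m : ℕ => (⌊s / t * m⌋₊ : ℝ) / m * t) atTop (𝓝 s) := by
    have := ((tendsto_nat_floor_mul_div_atTop (div_nonneg hs0 ht.le)).comp
      tendsto_natCast_atTop_atTop).mul_const t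
    rwa [div_mul_cancel₀ s ht.ne'] at this
  filter_upwards [((hf.tendsto s).comp hlim).eventually (lt_mem_nhds hrs)] with m hm
  refine ⟨⌊s / t * m⌋₊, Nat.floor_le_of_le ?_, ?_⟩
  · exact mul_le_of_le_one_left (Nat.cast_nonneg m) (div_le_one_of_le₀ hst ht.le)
  · rw [← div_mul_eq_mul_div]
    exact hm.le

variable {Ω : Type*} [MeasurableSpace Ω] {μ : Measure Ω}

-- Needs no measurability: it is applied to `{r ≤ ⨆ s, B s ω}`, which is never shown measurable.
theorem measure_le_of_forall_eventually_mem {A : Set Ω} {G : ℕ → Set Ω} {c : ℝ≥0∞}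
    (hA : ∀ ω ∈ A, ∀ᶠ m in atTop, ω ∈ G m) (hG : ∀ᶠ m in atTop, μ (G m) ≤ c) : μ A ≤ c := by
  obtain ⟨N₀, hN₀⟩ := eventually_atTop.1 hG
  have hmono : Monotone fun N => ⋂ m ≥ N, G m :=
    fun N N' hN => biInter_subset_biInter_left fun m hm => hN.trans hm
  calc μ A ≤ μ (⋃ N, ⋂ m ≥ N, G m) := measure_mono fun ω hω => by
          simpa [eventually_atTop] using hA ω hω
    _ = ⨆ N, μ (⋂ m ≥ N, G m) := hmono.measure_iUnion
    _ ≤ c := iSup_le fun N => (measure_mono (biInter_subset_of_mem (le_max_left N N₀))).trans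
          (hN₀ _ (le_max_right N N₀))

variable [IsFiniteMeasure μ] {X : Ω → ℝ}

theorem tendsto_measure_le_nhdsLT (hX : Measurable X) (r : ℝ) :
    Tendsto (fun x => μ {ω | x ≤ X ω}) (𝓝[<] r) (𝓝 (μ {ω | r ≤ X ω})) := by
  refine tendsto_measure_of_tendsto_indicator_of_isFiniteMeasure _ μ
    (fun x => measurableSet_le measurable_const hX) fun ω => ?_
  rcases le_or_gt r (X ω) with h | h
  · filter_upwards [self_mem_nhdsWithin] with x hx
    exact iff_of_true (le_of_lt (lt_of_lt_of_le hx h)) h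
  · filter_upwards [Ioo_mem_nhdsLT h] with x hx
    exact iff_of_false (not_le.2 hx.1) (not_le.2 h)

theorem tendsto_measure_lt_nhdsGT (hX : Measurable X) (r : ℝ) :
    Tendsto (fun x => μ {ω | x < X ω}) (𝓝[>] r) (𝓝 (μ {ω | r < X ω})) := by
  refine tendsto_measure_of_tendsto_indicator_of_isFiniteMeasure _ μ
    (fun x => measurableSet_lt measurable_const hX) fun ω => ?_
  rcases lt_or_ge r (X ω) with h | h
  · filter_upwards [Ioo_mem_nhdsGT h] with x hx
    exact iff_of_true hx.2 h
  · filter_upwards [self_mem_nhdsWithin] with x hx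
    exact iff_of_false (not_lt.2 (h.trans (le_of_lt hx))) (not_lt.2 h)

end Limits

namespace IsStandardBM

variable {Ω : Type*} [MeasurableSpace Ω] {μ : Measure Ω} {B : ℝ → Ω → ℝ} {t : ℝ} {m : ℕ}

theorem map_eq_gaussianReal (hB : IsStandardBM μ B) (ht : 0 ≤ t) :
    μ.map (B t) = gaussianReal 0 t.toNNReal := by
  simpa [hB.1] using hB.2.2.2.1 0 t le_rfl ht

theorem map_neg_sub (hB : IsStandardBM μ B) {s : ℝ} (hs : 0 ≤ s) (hst : s ≤ t) :
    μ.map (-(B t - B s)) = μ.map (B t - B s) := by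
  have hlaw : μ.map (B t - B s) = gaussianReal 0 (t - s).toNNReal := hB.2.2.2.1 s t hs hst
  calc μ.map (-(B t - B s)) = (μ.map (B t - B s)).map Neg.neg :=
        (Measure.map_map measurable_neg ((hB.2.2.1 t).sub (hB.2.2.1 s))).symm
    _ = μ.map (B t - B s) := by rw [hlaw, gaussianReal_map_neg, neg_zero]

theorem iIndepFun_gridProcess_increments (hB : IsStandardBM μ B) (ht : 0 ≤ t) (m : ℕ) :
    iIndepFun (fun i : Fin m => gridProcess B t m ((i : ℕ) + 1) - gridProcess B t m i) μ :=
  hB.2.2.2.2 m (fun i => (i : ℕ) * t / m)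
    (fun i j hij => by dsimp only; gcongr; exact_mod_cast hij) fun i => by positivity

theorem indepFun_gridProcess (hB : IsStandardBM μ B) (ht : 0 ≤ t) {k : ℕ} (hkm : k ≤ m) :
    IndepFun (fun ω (j : Fin (k + 1)) => gridProcess B t m j ω)
      (gridProcess B t m m - gridProcess B t m k) μ :=
  indepFun_past_sub_of_iIndepFun_increments (S := gridProcess B t m) (fun _ => hB.2.2.1 _)
    (funext fun ω => by simp [gridProcess, hB.1]) hkm (hB.iIndepFun_gridProcess_increments ht m)

theorem map_neg_gridProcess_sub (hB : IsStandardBM μ B) (ht : 0 ≤ t) {k : ℕ} (hkm : k ≤ m) :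
    μ.map (-(gridProcess B t m m - gridProcess B t m k))
      = μ.map (gridProcess B t m m - gridProcess B t m k) :=
  hB.map_neg_sub (natCast_mul_div_mem_Icc ht hkm).1 (by gcongr)

theorem measure_lt_eq_measure_le (hB : IsStandardBM μ B) (ht : 0 < t) (r : ℝ) :
    μ {ω | r < B t ω} = μ {ω | r ≤ B t ω} := by
  have := nullSingletonClass_gaussianReal (μ := 0) (Real.toNNReal_pos.2 ht).ne'
  change μ (B t ⁻¹' Ioi r) = μ (B t ⁻¹' Ici r)
  rw [← Measure.map_apply (hB.2.2.1 t) measurableSet_Ioi,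
    ← Measure.map_apply (hB.2.2.1 t) measurableSet_Ici, hB.map_eq_gaussianReal ht.le,
    measure_congr Ioi_ae_eq_Ici]

theorem reachesLevel_gridProcess_subset (hB : IsStandardBM μ B) (ht : 0 ≤ t) (r : ℝ) (m : ℕ) :
    reachesLevel (gridProcess B t m) r m ⊆ {ω | r ≤ ⨆ s : Icc (0 : ℝ) t, B s ω} :=
  fun ω ⟨_, hkm, hk⟩ => hk.trans <|
    le_ciSup (f := fun s : Icc (0 : ℝ) t => B s ω)
      (isCompact_range ((hB.2.1 ω).comp continuous_subtype_val)).bddAbove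
      ⟨_, natCast_mul_div_mem_Icc ht hkm⟩

variable [IsFiniteMeasure μ]

theorem measure_reachesLevel_gridProcess_le (hB : IsStandardBM μ B) (ht : 0 ≤ t) (hm : m ≠ 0)
    (r : ℝ) :
    μ (reachesLevel (gridProcess B t m) r m) ≤ μ {ω | r < B t ω} + μ {ω | r ≤ B t ω} := by
  simpa only [gridProcess_self hm] using measure_reachesLevel_le (S := gridProcess B t m) (r := r)
    (fun _ => hB.2.2.1 _) (fun _ => hB.indepFun_gridProcess ht)
    (fun _ => hB.map_neg_gridProcess_sub ht)

theorem measure_lt_add_measure_le_le_gridProcess (hB : IsStandardBM μ B) (ht : 0 ≤ t)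
    (hm : m ≠ 0) {r ε : ℝ} (hr : 0 < r) (hε : 0 ≤ ε) :
    μ {ω | r + 2 * ε < B t ω} + μ {ω | r ≤ B t ω}
      ≤ μ (reachesLevel (gridProcess B t m) r m) + μ (largeIncrement (gridProcess B t m) ε m) := by
  simpa only [gridProcess_self hm] using measure_lt_add_measure_le_le (S := gridProcess B t m)
    (fun _ => hB.2.2.1 _) (fun _ => hB.indepFun_gridProcess ht)
    (fun _ => hB.map_neg_gridProcess_sub ht) (fun ω => by simpa [gridProcess, hB.1] using hr) hε

theorem tendsto_measure_largeIncrement_gridProcess (hB : IsStandardBM μ B) (ht : 0 ≤ t) {ε : ℝ}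
    (hε : 0 < ε) :
    Tendsto (fun m => μ (largeIncrement (gridProcess B t m) ε m)) atTop (𝓝 0) := by
  rw [← measure_empty (μ := μ)]
  refine tendsto_measure_of_tendsto_indicator_of_isFiniteMeasure _ μ
    (fun m => measurableSet_largeIncrement (fun _ => hB.2.2.1 _) ε m) fun ω => ?_
  filter_upwards [(hB.2.1 ω).eventually_abs_sub_lt_of_gridpoints ht hε] with m hm
  exact iff_of_false (fun ⟨k, hk, hkε⟩ => (lt_abs.2 (Or.inl hkε)).not_gt (hm k hk))
    (notMem_empty ω)

theorem measure_le_iSup_le_two_mul (hB : IsStandardBM μ B) (ht : 0 < t) {r : ℝ} :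
    μ {ω | r ≤ ⨆ s : Icc (0 : ℝ) t, B s ω} ≤ 2 * μ {ω | r ≤ B t ω} := by
  have hbound : ∀ x < r, μ {ω | r ≤ ⨆ s : Icc (0 : ℝ) t, B s ω} ≤ 2 * μ {ω | x ≤ B t ω} := by
    intro x hx
    refine measure_le_of_forall_eventually_mem
      (G := fun m => reachesLevel (gridProcess B t m) x m)
      (fun ω hω => (hB.2.1 ω).eventually_exists_le_of_lt_iSup ht (hx.trans_le hω))
      (eventually_atTop.2 ⟨1, fun m hm => ?_⟩)
    calc μ (reachesLevel (gridProcess B t m) x m)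
        ≤ μ {ω | x < B t ω} + μ {ω | x ≤ B t ω} :=
          hB.measure_reachesLevel_gridProcess_le ht.le (by omega) x
      _ ≤ 2 * μ {ω | x ≤ B t ω} := by
          rw [two_mul]
          exact add_le_add (measure_mono fun ω (h : x < B t ω) => h.le) le_rfl
  exact ge_of_tendsto (ENNReal.Tendsto.const_mul (tendsto_measure_le_nhdsLT (hB.2.2.1 t) r)
    (Or.inr ENNReal.ofNat_ne_top)) (eventually_nhdsWithin_of_forall fun x hx => hbound x hx)

theorem two_mul_measure_le_le_measure_le_iSup (hB : IsStandardBM μ B) (ht : 0 < t) {r : ℝ}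
    (hr : 0 < r) :
    2 * μ {ω | r ≤ B t ω} ≤ μ {ω | r ≤ ⨆ s : Icc (0 : ℝ) t, B s ω} := by
  have hbound : ∀ x > r, μ {ω | x < B t ω} + μ {ω | r ≤ B t ω}
      ≤ μ {ω | r ≤ ⨆ s : Icc (0 : ℝ) t, B s ω} := by
    intro x hx
    obtain ⟨ε, hε, rfl⟩ : ∃ ε > 0, x = r + 2 * ε := ⟨(x - r) / 2, by linarith, by ring⟩
    have hgrid : ∀ m ≠ 0, μ {ω | r + 2 * ε < B t ω} + μ {ω | r ≤ B t ω}
        ≤ μ {ω | r ≤ ⨆ s : Icc (0 : ℝ) t, B s ω} + μ (largeIncrement (gridProcess B t m) ε m) :=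
      fun m hm => (hB.measure_lt_add_measure_le_le_gridProcess ht.le hm hr hε.le).trans
        (add_le_add (measure_mono (hB.reachesLevel_gridProcess_subset ht.le r m)) le_rfl)
    refine ge_of_tendsto ?_ (eventually_atTop.2 ⟨1, fun m hm => hgrid m (by omega)⟩)
    simpa using tendsto_const_nhds.add (hB.tendsto_measure_largeIncrement_gridProcess ht.le hε)
  have := le_of_tendsto ((tendsto_measure_lt_nhdsGT (hB.2.2.1 t) r).add tendsto_const_nhds)
    (eventually_nhdsWithin_of_forall fun x hx => hbound x hx)
  rwa [hB.measure_lt_eq_measure_le ht, ← two_mul] at this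

end IsStandardBM

theorem gaussianReal_Ici_eq {v : ℝ} (hv : 0 < v) (R : ℝ) :
    gaussianReal 0 v.toNNReal (Ici R)
      = ENNReal.ofReal ((√(2 * π * v))⁻¹ * ∫ y in Ioi R, exp (-y ^ 2 / (2 * v))) := by
  rw [gaussianReal_apply_eq_integral 0 (Real.toNNReal_pos.2 hv).ne', integral_Ici_eq_integral_Ioi,
    ← integral_const_mul]
  simp only [gaussianPDFReal, Real.coe_toNNReal v hv.le, sub_zero]

/-- Reflection principle: for standard one-dimensional Brownian motion started at `0`
and `R > 0`, `t > 0`, `P(max_{0≤s≤t} B_s ≥ R) = 2 P(B_t ≥ R)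
= (2/√(2πt)) ∫_R^∞ e^{−y²/(2t)} dy`. -/
theorem reflection_principle
    {Ω : Type*} [MeasurableSpace Ω] (μ : Measure Ω) [IsProbabilityMeasure μ]
    (B : ℝ → Ω → ℝ) (hB : IsStandardBM μ B) (R t : ℝ) (hR : 0 < R) (ht : 0 < t) :
    μ {ω | R ≤ ⨆ s : Icc (0 : ℝ) t, B (s : ℝ) ω} = 2 * μ {ω | R ≤ B t ω} ∧
    μ {ω | R ≤ ⨆ s : Icc (0 : ℝ) t, B (s : ℝ) ω}
      = ENNReal.ofReal
          ((2 / Real.sqrt (2 * π * t)) * ∫ y in Ioi R, Real.exp (-y ^ 2 / (2 * t))) := by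
  have hsup := le_antisymm (hB.measure_le_iSup_le_two_mul ht)
    (hB.two_mul_measure_le_le_measure_le_iSup ht hR)
  refine ⟨hsup, hsup.trans ?_⟩
  have hlaw : μ {ω | R ≤ B t ω} = gaussianReal 0 t.toNNReal (Ici R) := by
    rw [← hB.map_eq_gaussianReal ht.le, Measure.map_apply (hB.2.2.1 t) measurableSet_Ici]
    rfl
  rw [hlaw, gaussianReal_Ici_eq ht, ← ENNReal.ofReal_ofNat 2, ← ENNReal.ofReal_mul zero_le_two]
  congr 1
  ring
end
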